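/- arXiv:2502.12467 — 2 statements merged into one kernel-verified Lean document; each statement's English description precedes it below -/
import Mathlib

section
/- Feasible set equivalence for HDeePC (horizon form): Let the full system y = O_N(A,C) x_ini + T_N(A,B,C,D) u with A = [[A_u,A_f],[A_c,A_κ]], C = [[C_u,C_f],[C_c,C_κ]], B = col(B_u,B_κ), D = col(D_u,D_κ). Suppose A_y, C_y satisfy A_c = A_y C_u, A_y C_f = 0, A_y D_u = 0, C_c = C_y C_u, C_y C_f = 0, C_y D_u = 0. Then for any x_ini = (x_{u,ini}, x_{κ,ini}) and input sequence u, the pair (u, y) with y = (y_u, y_κ) satisfies the combined constraints { y_u = O_N(A,[C_u C_f]) x_ini + T_N(A,B,[C_u C_f],D_u) u, together with the known-model recursion x_κ(0)=x_{κ,ini}, x_κ(k+1) = A_y y_u(k) + A_κ x_κ(k) + B_κ u(k), y_κ(k) = C_y y_u(k) + C_κ x_κ(k) + D_κ u(k) } if and only if y = O_N(A,C) x_ini + T_N(A,B,C,D) u. -/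
open Matrix

/-- Extended observability matrix `O_N(A,C)`. -/
def obsMat {n p : Type*} [Fintype n] [DecidableEq n] (N : ℕ)
    (A : Matrix n n ℝ) (C : Matrix p n ℝ) : Matrix (Fin N × p) n ℝ :=
  Matrix.of fun q j => (C * A ^ (q.1 : ℕ)) q.2 j

/-- Lower block-triangular Toeplitz impulse-response matrix `T_N(A,B,C,D)`. -/
def toepMat {n m p : Type*} [Fintype n] [DecidableEq n] [Fintype m] (N : ℕ)
    (A : Matrix n n ℝ) (B : Matrix n m ℝ) (C : Matrix p n ℝ) (D : Matrix p m ℝ) :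
    Matrix (Fin N × p) (Fin N × m) ℝ :=
  Matrix.of fun q r =>
    if (q.1 : ℕ) = (r.1 : ℕ) then D q.2 r.2
    else if (r.1 : ℕ) < (q.1 : ℕ) then (C * A ^ ((q.1 : ℕ) - (r.1 : ℕ) - 1) * B) q.2 r.2
    else 0

/-- extend a finite-horizon input to all of `ℕ` -/
def uext {m' : Type*} {N : ℕ} (u : Fin N × m' → ℝ) : ℕ → m' → ℝ :=
  fun j b => if h : j < N then u (⟨j, h⟩, b) else 0

/-- state evolution -/
def sv {n m : Type*} [Fintype n] [Fintype m] [DecidableEq n]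
    (A : Matrix n n ℝ) (B : Matrix n m ℝ) (xini : n → ℝ) (u : ℕ → m → ℝ) : ℕ → n → ℝ
  | 0 => xini
  | (k+1) => A.mulVec (sv A B xini u k) + B.mulVec (u k)

lemma mulVec_sum' {n m : Type*} [Fintype n] [Fintype m] {ι : Type*} (s : Finset ι)
    (A : Matrix n m ℝ) (v : ι → m → ℝ) :
    A.mulVec (∑ j ∈ s, v j) = ∑ j ∈ s, A.mulVec (v j) := by
  exact map_sum A.mulVecLin v s

lemma sv_closed {n m : Type*} [Fintype n] [Fintype m] [DecidableEq n]
    (A : Matrix n n ℝ) (B : Matrix n m ℝ) (xini : n → ℝ) (u : ℕ → m → ℝ) (k : ℕ) :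
    sv A B xini u k = (A ^ k).mulVec xini
      + ∑ j ∈ Finset.range k, ((A ^ (k - 1 - j)) * B).mulVec (u j) := by
  induction k with
  | zero => simp [sv]
  | succ k ih =>
    rw [show sv A B xini u (k+1) = A.mulVec (sv A B xini u k) + B.mulVec (u k) from rfl, ih,
      Matrix.mulVec_add, Matrix.mulVec_mulVec, mulVec_sum', Finset.sum_range_succ]
    have h1 : A * A ^ k = A ^ (k+1) := (pow_succ' A k).symm
    have h2 : ∀ j ∈ Finset.range k,
        A.mulVec (((A ^ (k - 1 - j)) * B).mulVec (u j))
          = ((A ^ (k + 1 - 1 - j)) * B).mulVec (u j) := by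
      intro j hj
      rw [Matrix.mulVec_mulVec, ← Matrix.mul_assoc, ← pow_succ']
      have : k - 1 - j + 1 = k + 1 - 1 - j := by
        simp only [Finset.mem_range] at hj; omega
      rw [this]
    rw [Finset.sum_congr rfl h2, h1]
    simp [add_assoc]

lemma key {n m p : Type*} [Fintype n] [DecidableEq n] [Fintype m] [Fintype p] {N : ℕ}
    (A : Matrix n n ℝ) (B : Matrix n m ℝ) (C : Matrix p n ℝ) (D : Matrix p m ℝ)
    (xini : n → ℝ) (u : Fin N × m → ℝ) (k : Fin N) (q : p) :
    ((obsMat N A C).mulVec xini + (toepMat N A B C D).mulVec u) (k, q)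
      = C.mulVec (sv A B xini (uext u) k) q
        + D.mulVec (fun b => u (k, b)) q := by
  set u' : ℕ → m → ℝ := uext u with hu'
  have hC : C.mulVec (sv A B xini u' k)
      = (C * A ^ (k : ℕ)).mulVec xini
        + ∑ j ∈ Finset.range (k : ℕ), (C * A ^ ((k : ℕ) - 1 - j) * B).mulVec (u' j) := by
    rw [sv_closed, Matrix.mulVec_add, Matrix.mulVec_mulVec, mulVec_sum']
    congr 1
    refine Finset.sum_congr rfl fun j hj => ?_
    rw [Matrix.mulVec_mulVec, Matrix.mul_assoc]
  have hobs : (obsMat N A C).mulVec xini (k, q) = (C * A ^ (k : ℕ)).mulVec xini q := rfl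
  have htoep : (toepMat N A B C D).mulVec u (k, q)
      = (∑ j ∈ Finset.range (k : ℕ), (C * A ^ ((k : ℕ) - 1 - j) * B).mulVec (u' j) q)
        + D.mulVec (fun b => u (k, b)) q := by
    have hexp : (toepMat N A B C D).mulVec u (k, q)
        = ∑ r : Fin N, ∑ b : m, toepMat N A B C D (k, q) (r, b) * u (r, b) := by
      rw [Matrix.mulVec, dotProduct, Fintype.sum_prod_type]
    rw [hexp]
    have hr : ∀ r : Fin N,
        (∑ b : m, toepMat N A B C D (k, q) (r, b) * u (r, b))
          = (if (r : ℕ) < (k : ℕ)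
              then (C * A ^ ((k : ℕ) - 1 - (r : ℕ)) * B).mulVec (u' (r : ℕ)) q else 0)
            + (if r = k then D.mulVec (fun b => u (k, b)) q else 0) := by
      intro r
      rcases lt_trichotomy ((r : ℕ)) ((k : ℕ)) with h | h | h
      · have hrk : r ≠ k := by intro hh; rw [hh] at h; omega
        have e1 : ∀ b, toepMat N A B C D (k, q) (r, b)
            = (C * A ^ ((k : ℕ) - 1 - (r : ℕ)) * B) q b := by
          intro b
          simp only [toepMat, Matrix.of_apply]
          rw [if_neg (by omega), if_pos h,
            show (k : ℕ) - (r : ℕ) - 1 = (k : ℕ) - 1 - (r : ℕ) from by omega]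
        simp only [e1]
        rw [if_pos h, if_neg hrk, add_zero]
        have hu : u' (r : ℕ) = fun b => u (r, b) := by
          funext b; simp [hu', uext, r.isLt]
        rw [hu]
        rfl
      · have hrk : r = k := Fin.val_injective h
        subst hrk
        have e2 : ∀ b, toepMat N A B C D (r, q) (r, b) = D q b := by
          intro b
          simp [toepMat]
        simp [e2, Matrix.mulVec, dotProduct]
      · have hrk : r ≠ k := by intro hh; rw [hh] at h; omega
        have e3 : ∀ b, toepMat N A B C D (k, q) (r, b) = 0 := by
          intro b
          simp only [toepMat, Matrix.of_apply]
          rw [if_neg (by omega), if_neg (by omega)]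
        simp only [e3]
        rw [if_neg (by omega), if_neg hrk]
        simp
    rw [Finset.sum_congr rfl (fun r _ => hr r), Finset.sum_add_distrib,
      Finset.sum_ite_eq' Finset.univ k]
    simp only [Finset.mem_univ, if_true]
    congr 1
    rw [Fin.sum_univ_eq_sum_range
      (fun j => if j < (k : ℕ) then (C * A ^ ((k : ℕ) - 1 - j) * B).mulVec (u' j) q else 0)]
    rw [← Finset.sum_filter]
    have hfil : (Finset.range N).filter (fun j => j < (k : ℕ)) = Finset.range (k : ℕ) := by
      ext j
      simp only [Finset.mem_filter, Finset.mem_range]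
      have := k.isLt
      omega
    rw [hfil]
  rw [Pi.add_apply, hobs, htoep, hC, Pi.add_apply, Finset.sum_apply]
  ring

lemma fromColumns_mulVec' {p n1 n2 : Type*} [Fintype n1] [Fintype n2]
    (C1 : Matrix p n1 ℝ) (C2 : Matrix p n2 ℝ) (v : n1 ⊕ n2 → ℝ) :
    (fromCols C1 C2).mulVec v
      = C1.mulVec (fun i => v (Sum.inl i)) + C2.mulVec (fun i => v (Sum.inr i)) := by
  funext a
  simp [Matrix.mulVec, dotProduct, Matrix.fromCols, Fintype.sum_sum_type]

lemma fromBlocks_mulVec_inl {p1 p2 n1 n2 : Type*} [Fintype n1] [Fintype n2]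
    (M1 : Matrix p1 n1 ℝ) (M2 : Matrix p1 n2 ℝ) (M3 : Matrix p2 n1 ℝ) (M4 : Matrix p2 n2 ℝ)
    (v : n1 ⊕ n2 → ℝ) (a : p1) :
    (fromBlocks M1 M2 M3 M4).mulVec v (Sum.inl a)
      = (M1.mulVec (fun i => v (Sum.inl i)) + M2.mulVec (fun i => v (Sum.inr i))) a := by
  rw [fromBlocks_mulVec]
  rfl

lemma fromBlocks_mulVec_inr {p1 p2 n1 n2 : Type*} [Fintype n1] [Fintype n2]
    (M1 : Matrix p1 n1 ℝ) (M2 : Matrix p1 n2 ℝ) (M3 : Matrix p2 n1 ℝ) (M4 : Matrix p2 n2 ℝ)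
    (v : n1 ⊕ n2 → ℝ) (a : p2) :
    (fromBlocks M1 M2 M3 M4).mulVec v (Sum.inr a)
      = (M3.mulVec (fun i => v (Sum.inl i)) + M4.mulVec (fun i => v (Sum.inr i))) a := by
  rw [fromBlocks_mulVec]
  rfl

lemma fromRows_mulVec_inl {p1 p2 n1 : Type*} [Fintype n1]
    (R1 : Matrix p1 n1 ℝ) (R2 : Matrix p2 n1 ℝ) (w : n1 → ℝ) (a : p1) :
    (fromRows R1 R2).mulVec w (Sum.inl a) = R1.mulVec w a := by
  rw [fromRows_mulVec]; rfl

lemma fromRows_mulVec_inr {p1 p2 n1 : Type*} [Fintype n1]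
    (R1 : Matrix p1 n1 ℝ) (R2 : Matrix p2 n1 ℝ) (w : n1 → ℝ) (a : p2) :
    (fromRows R1 R2).mulVec w (Sum.inr a) = R2.mulVec w a := by
  rw [fromRows_mulVec]; rfl

/-- Feasible set equivalence for HDeePC (horizon form): the data-based constraint for the
unknown outputs together with the known-model recursion hold if and only if the stacked
output satisfies the full-system formula `y = O_N(A,C) x_ini + T_N(A,B,C,D) u`. -/
theorem hdeepc_feasible_set_equivalence (nu nk pu pk m N : ℕ)
    (Au : Matrix (Fin nu) (Fin nu) ℝ) (Af : Matrix (Fin nu) (Fin nk) ℝ)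
    (Ac : Matrix (Fin nk) (Fin nu) ℝ) (Ak : Matrix (Fin nk) (Fin nk) ℝ)
    (Bu : Matrix (Fin nu) (Fin m) ℝ) (Bk : Matrix (Fin nk) (Fin m) ℝ)
    (Cu : Matrix (Fin pu) (Fin nu) ℝ) (Cf : Matrix (Fin pu) (Fin nk) ℝ)
    (Cc : Matrix (Fin pk) (Fin nu) ℝ) (Ck : Matrix (Fin pk) (Fin nk) ℝ)
    (Du : Matrix (Fin pu) (Fin m) ℝ) (Dk : Matrix (Fin pk) (Fin m) ℝ)
    (Ay : Matrix (Fin nk) (Fin pu) ℝ) (Cy : Matrix (Fin pk) (Fin pu) ℝ)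
    (hAc : Ac = Ay * Cu) (hACf : Ay * Cf = 0) (hADu : Ay * Du = 0)
    (hCc : Cc = Cy * Cu) (hCCf : Cy * Cf = 0) (hCDu : Cy * Du = 0)
    (xini : Fin nu ⊕ Fin nk → ℝ)
    (u : Fin N × Fin m → ℝ) (yu : Fin N × Fin pu → ℝ) (yk : Fin N × Fin pk → ℝ) :
    -- combined HDeePC constraints
    ((yu = (obsMat N (fromBlocks Au Af Ac Ak) (fromCols Cu Cf)).mulVec xini +
        (toepMat N (fromBlocks Au Af Ac Ak) (fromRows Bu Bk)
          (fromCols Cu Cf) Du).mulVec u) ∧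
      ∃ xk : ℕ → Fin nk → ℝ,
        (xk 0 = fun i => xini (Sum.inr i)) ∧
        (∀ k : ℕ, ∀ hk : k < N,
          xk (k + 1) = Ay.mulVec (fun a => yu (⟨k, hk⟩, a)) + Ak.mulVec (xk k) +
            Bk.mulVec (fun b => u (⟨k, hk⟩, b))) ∧
        (∀ k : ℕ, ∀ hk : k < N,
          (fun a => yk (⟨k, hk⟩, a)) =
            Cy.mulVec (fun a => yu (⟨k, hk⟩, a)) + Ck.mulVec (xk k) +
              Dk.mulVec (fun b => u (⟨k, hk⟩, b))))
    ↔
    -- full-system stacked output formula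
    ((fun q : Fin N × (Fin pu ⊕ Fin pk) =>
        Sum.elim (fun a => yu (q.1, a)) (fun a => yk (q.1, a)) q.2) =
      (obsMat N (fromBlocks Au Af Ac Ak) (fromBlocks Cu Cf Cc Ck)).mulVec xini +
        (toepMat N (fromBlocks Au Af Ac Ak) (fromRows Bu Bk)
          (fromBlocks Cu Cf Cc Ck) (fromRows Du Dk)).mulVec u) := by
  have hAyv : ∀ (vu : Fin nu → ℝ) (vk : Fin nk → ℝ) (w : Fin m → ℝ),
      Ay.mulVec (Cu.mulVec vu + Cf.mulVec vk + Du.mulVec w) = Ac.mulVec vu := by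
    intro vu vk w
    rw [Matrix.mulVec_add, Matrix.mulVec_add, Matrix.mulVec_mulVec, Matrix.mulVec_mulVec,
      Matrix.mulVec_mulVec, hACf, hADu, Matrix.zero_mulVec, Matrix.zero_mulVec, hAc,
      add_zero, add_zero]
  have hCyv : ∀ (vu : Fin nu → ℝ) (vk : Fin nk → ℝ) (w : Fin m → ℝ),
      Cy.mulVec (Cu.mulVec vu + Cf.mulVec vk + Du.mulVec w) = Cc.mulVec vu := by
    intro vu vk w
    rw [Matrix.mulVec_add, Matrix.mulVec_add, Matrix.mulVec_mulVec, Matrix.mulVec_mulVec,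
      Matrix.mulVec_mulVec, hCCf, hCDu, Matrix.zero_mulVec, Matrix.zero_mulVec, hCc,
      add_zero, add_zero]
  have huext : ∀ (j : ℕ) (hj : j < N), uext u j = fun b => u (⟨j, hj⟩, b) := by
    intro j hj; funext b; simp [uext, hj]
  have hstep : ∀ j : ℕ,
      (fun i => sv (fromBlocks Au Af Ac Ak) (fromRows Bu Bk) xini (uext u) (j + 1) (Sum.inr i))
        = Ac.mulVec (fun i => sv (fromBlocks Au Af Ac Ak) (fromRows Bu Bk) xini (uext u) j (Sum.inl i)) + Ak.mulVec (fun i => sv (fromBlocks Au Af Ac Ak) (fromRows Bu Bk) xini (uext u) j (Sum.inr i)) + Bk.mulVec (uext u j) := by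
    intro j
    funext i
    show ((fromBlocks Au Af Ac Ak).mulVec (sv (fromBlocks Au Af Ac Ak) (fromRows Bu Bk) xini (uext u) j)
        + (fromRows Bu Bk).mulVec (uext u j)) (Sum.inr i) = _
    rw [Pi.add_apply, fromBlocks_mulVec_inr, fromRows_mulVec_inr]
    simp only [Pi.add_apply]
  have EP : (yu = (obsMat N (fromBlocks Au Af Ac Ak) (fromCols Cu Cf)).mulVec xini +
        (toepMat N (fromBlocks Au Af Ac Ak) (fromRows Bu Bk)
          (fromCols Cu Cf) Du).mulVec u)
      ↔ ∀ k : Fin N, (fun a => yu (k, a))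
          = Cu.mulVec (fun i => sv (fromBlocks Au Af Ac Ak) (fromRows Bu Bk) xini (uext u) ↑k (Sum.inl i)) + Cf.mulVec (fun i => sv (fromBlocks Au Af Ac Ak) (fromRows Bu Bk) xini (uext u) ↑k (Sum.inr i)) + Du.mulVec (fun b => u (k, b)) := by
    constructor
    · intro h k
      funext a
      calc yu (k, a) = ((obsMat N (fromBlocks Au Af Ac Ak) (fromCols Cu Cf)).mulVec xini +
        (toepMat N (fromBlocks Au Af Ac Ak) (fromRows Bu Bk)
          (fromCols Cu Cf) Du).mulVec u) (k, a) := by rw [h]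
        _ = (fromCols Cu Cf).mulVec (sv (fromBlocks Au Af Ac Ak) (fromRows Bu Bk) xini (uext u) ↑k) a + Du.mulVec (fun b => u (k, b)) a :=
          key (fromBlocks Au Af Ac Ak) (fromRows Bu Bk) (fromCols Cu Cf) Du xini u k a
        _ = (Cu.mulVec (fun i => sv (fromBlocks Au Af Ac Ak) (fromRows Bu Bk) xini (uext u) ↑k (Sum.inl i)) + Cf.mulVec (fun i => sv (fromBlocks Au Af Ac Ak) (fromRows Bu Bk) xini (uext u) ↑k (Sum.inr i)) + Du.mulVec (fun b => u (k, b))) a := by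
          rw [fromColumns_mulVec']
          simp only [Pi.add_apply]
    · intro h
      funext r
      obtain ⟨k, a⟩ := r
      calc yu (k, a)
          = (Cu.mulVec (fun i => sv (fromBlocks Au Af Ac Ak) (fromRows Bu Bk) xini (uext u) ↑k (Sum.inl i)) + Cf.mulVec (fun i => sv (fromBlocks Au Af Ac Ak) (fromRows Bu Bk) xini (uext u) ↑k (Sum.inr i)) + Du.mulVec (fun b => u (k, b))) a :=
            congrFun (h k) a
        _ = (fromCols Cu Cf).mulVec (sv (fromBlocks Au Af Ac Ak) (fromRows Bu Bk) xini (uext u) ↑k) a + Du.mulVec (fun b => u (k, b)) a := by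
          rw [fromColumns_mulVec']
          simp only [Pi.add_apply]
        _ = ((obsMat N (fromBlocks Au Af Ac Ak) (fromCols Cu Cf)).mulVec xini +
        (toepMat N (fromBlocks Au Af Ac Ak) (fromRows Bu Bk)
          (fromCols Cu Cf) Du).mulVec u) (k, a) :=
          (key (fromBlocks Au Af Ac Ak) (fromRows Bu Bk) (fromCols Cu Cf) Du xini u k a).symm
  have EF : ((fun q : Fin N × (Fin pu ⊕ Fin pk) =>
        Sum.elim (fun a => yu (q.1, a)) (fun a => yk (q.1, a)) q.2) = (obsMat N (fromBlocks Au Af Ac Ak) (fromBlocks Cu Cf Cc Ck)).mulVec xini +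
        (toepMat N (fromBlocks Au Af Ac Ak) (fromRows Bu Bk)
          (fromBlocks Cu Cf Cc Ck) (fromRows Du Dk)).mulVec u)
      ↔ ((∀ k : Fin N, (fun a => yu (k, a))
            = Cu.mulVec (fun i => sv (fromBlocks Au Af Ac Ak) (fromRows Bu Bk) xini (uext u) ↑k (Sum.inl i)) + Cf.mulVec (fun i => sv (fromBlocks Au Af Ac Ak) (fromRows Bu Bk) xini (uext u) ↑k (Sum.inr i)) + Du.mulVec (fun b => u (k, b)))
        ∧ (∀ k : Fin N, (fun c => yk (k, c))
            = Cc.mulVec (fun i => sv (fromBlocks Au Af Ac Ak) (fromRows Bu Bk) xini (uext u) ↑k (Sum.inl i)) + Ck.mulVec (fun i => sv (fromBlocks Au Af Ac Ak) (fromRows Bu Bk) xini (uext u) ↑k (Sum.inr i)) + Dk.mulVec (fun b => u (k, b)))) := by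
    constructor
    · intro h
      constructor
      · intro k
        funext a
        calc yu (k, a) = ((obsMat N (fromBlocks Au Af Ac Ak) (fromBlocks Cu Cf Cc Ck)).mulVec xini +
        (toepMat N (fromBlocks Au Af Ac Ak) (fromRows Bu Bk)
          (fromBlocks Cu Cf Cc Ck) (fromRows Du Dk)).mulVec u) (k, Sum.inl a) := by rw [← h]; exact rfl
          _ = (fromBlocks Cu Cf Cc Ck).mulVec (sv (fromBlocks Au Af Ac Ak) (fromRows Bu Bk) xini (uext u) ↑k) (Sum.inl a)
              + (fromRows Du Dk).mulVec (fun b => u (k, b)) (Sum.inl a) :=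
            key (fromBlocks Au Af Ac Ak) (fromRows Bu Bk) (fromBlocks Cu Cf Cc Ck)
              (fromRows Du Dk) xini u k (Sum.inl a)
          _ = (Cu.mulVec (fun i => sv (fromBlocks Au Af Ac Ak) (fromRows Bu Bk) xini (uext u) ↑k (Sum.inl i)) + Cf.mulVec (fun i => sv (fromBlocks Au Af Ac Ak) (fromRows Bu Bk) xini (uext u) ↑k (Sum.inr i)) + Du.mulVec (fun b => u (k, b))) a := by
            rw [fromBlocks_mulVec_inl, fromRows_mulVec_inl]
            simp only [Pi.add_apply]
      · intro k
        funext c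
        calc yk (k, c) = ((obsMat N (fromBlocks Au Af Ac Ak) (fromBlocks Cu Cf Cc Ck)).mulVec xini +
        (toepMat N (fromBlocks Au Af Ac Ak) (fromRows Bu Bk)
          (fromBlocks Cu Cf Cc Ck) (fromRows Du Dk)).mulVec u) (k, Sum.inr c) := by rw [← h]; exact rfl
          _ = (fromBlocks Cu Cf Cc Ck).mulVec (sv (fromBlocks Au Af Ac Ak) (fromRows Bu Bk) xini (uext u) ↑k) (Sum.inr c)
              + (fromRows Du Dk).mulVec (fun b => u (k, b)) (Sum.inr c) :=
            key (fromBlocks Au Af Ac Ak) (fromRows Bu Bk) (fromBlocks Cu Cf Cc Ck)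
              (fromRows Du Dk) xini u k (Sum.inr c)
          _ = (Cc.mulVec (fun i => sv (fromBlocks Au Af Ac Ak) (fromRows Bu Bk) xini (uext u) ↑k (Sum.inl i)) + Ck.mulVec (fun i => sv (fromBlocks Au Af Ac Ak) (fromRows Bu Bk) xini (uext u) ↑k (Sum.inr i)) + Dk.mulVec (fun b => u (k, b))) c := by
            rw [fromBlocks_mulVec_inr, fromRows_mulVec_inr]
            simp only [Pi.add_apply]
    · rintro ⟨h1, h2⟩
      funext r
      obtain ⟨k, q⟩ := r
      cases q with
      | inl a =>
        calc (fun q : Fin N × (Fin pu ⊕ Fin pk) =>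
        Sum.elim (fun a => yu (q.1, a)) (fun a => yk (q.1, a)) q.2) (k, Sum.inl a) = yu (k, a) := rfl
          _ = (Cu.mulVec (fun i => sv (fromBlocks Au Af Ac Ak) (fromRows Bu Bk) xini (uext u) ↑k (Sum.inl i)) + Cf.mulVec (fun i => sv (fromBlocks Au Af Ac Ak) (fromRows Bu Bk) xini (uext u) ↑k (Sum.inr i)) + Du.mulVec (fun b => u (k, b))) a :=
            congrFun (h1 k) a
          _ = (fromBlocks Cu Cf Cc Ck).mulVec (sv (fromBlocks Au Af Ac Ak) (fromRows Bu Bk) xini (uext u) ↑k) (Sum.inl a)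
              + (fromRows Du Dk).mulVec (fun b => u (k, b)) (Sum.inl a) := by
            rw [fromBlocks_mulVec_inl, fromRows_mulVec_inl]
            simp only [Pi.add_apply]
          _ = ((obsMat N (fromBlocks Au Af Ac Ak) (fromBlocks Cu Cf Cc Ck)).mulVec xini +
        (toepMat N (fromBlocks Au Af Ac Ak) (fromRows Bu Bk)
          (fromBlocks Cu Cf Cc Ck) (fromRows Du Dk)).mulVec u) (k, Sum.inl a) :=
            (key (fromBlocks Au Af Ac Ak) (fromRows Bu Bk) (fromBlocks Cu Cf Cc Ck)
              (fromRows Du Dk) xini u k (Sum.inl a)).symm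
      | inr c =>
        calc (fun q : Fin N × (Fin pu ⊕ Fin pk) =>
        Sum.elim (fun a => yu (q.1, a)) (fun a => yk (q.1, a)) q.2) (k, Sum.inr c) = yk (k, c) := rfl
          _ = (Cc.mulVec (fun i => sv (fromBlocks Au Af Ac Ak) (fromRows Bu Bk) xini (uext u) ↑k (Sum.inl i)) + Ck.mulVec (fun i => sv (fromBlocks Au Af Ac Ak) (fromRows Bu Bk) xini (uext u) ↑k (Sum.inr i)) + Dk.mulVec (fun b => u (k, b))) c :=
            congrFun (h2 k) c
          _ = (fromBlocks Cu Cf Cc Ck).mulVec (sv (fromBlocks Au Af Ac Ak) (fromRows Bu Bk) xini (uext u) ↑k) (Sum.inr c)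
              + (fromRows Du Dk).mulVec (fun b => u (k, b)) (Sum.inr c) := by
            rw [fromBlocks_mulVec_inr, fromRows_mulVec_inr]
            simp only [Pi.add_apply]
          _ = ((obsMat N (fromBlocks Au Af Ac Ak) (fromBlocks Cu Cf Cc Ck)).mulVec xini +
        (toepMat N (fromBlocks Au Af Ac Ak) (fromRows Bu Bk)
          (fromBlocks Cu Cf Cc Ck) (fromRows Du Dk)).mulVec u) (k, Sum.inr c) :=
            (key (fromBlocks Au Af Ac Ak) (fromRows Bu Bk) (fromBlocks Cu Cf Cc Ck)
              (fromRows Du Dk) xini u k (Sum.inr c)).symm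
  rw [EP, EF]
  constructor
  · rintro ⟨hP, xk0, h00, hrec, hout⟩
    refine ⟨hP, fun k => ?_⟩
    have hxk : ∀ j, j ≤ N → xk0 j = fun i => sv (fromBlocks Au Af Ac Ak) (fromRows Bu Bk) xini (uext u) j (Sum.inr i) := by
      intro j
      induction j with
      | zero =>
        intro _
        rw [h00]
        rfl
      | succ j ih =>
        intro hj
        have hjN : j < N := hj
        rw [hrec j hjN, ih (Nat.le_of_lt hjN), hstep j, hP ⟨j, hjN⟩, hAyv, huext j hjN]
    have h1 := hout ↑k k.isLt
    simp only [Fin.eta] at h1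
    rw [hxk ↑k (Nat.le_of_lt k.isLt), hP k, hCyv] at h1
    exact h1
  · rintro ⟨hP, hQ⟩
    refine ⟨hP, fun j => fun i => sv (fromBlocks Au Af Ac Ak) (fromRows Bu Bk) xini (uext u) j (Sum.inr i), rfl, fun j hj => ?_, fun j hj => ?_⟩
    · beta_reduce
      rw [hstep j, hP ⟨j, hj⟩, hAyv, huext j hj]
    · beta_reduce
      rw [hQ ⟨j, hj⟩, hP ⟨j, hj⟩, hCyv]
end

section
/- Under the HDeePC transformation assumptions (A_c = A_y C_u, A_y C_f = 0, A_y D_u = 0), the sequence x_κ generated by the model recursion x_κ(k+1) = A_y y_u(k) + A_κ x_κ(k) + B_κ u(k) with x_κ(0) = x_{κ,ini}, where y_u(k) is the true output of the full system trajectory starting from (x_{u,ini}, x_{κ,ini}) under input u, coincides for all k with the true known-state trajectory x_κ(k) of the full system. -/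
open Matrix

section

variable {R : Type*} [NonUnitalSemiring R] {n p q r s : Type*} [Fintype p] [Fintype q]
  [Fintype r] [Fintype s]

theorem mulVec_mulVec_add_of_mul_eq_zero (A : Matrix n p R) (C : Matrix p q R)
    (F : Matrix p r R) (D : Matrix p s R) (hF : A * F = 0) (hD : A * D = 0)
    (x : q → R) (w : r → R) (v : s → R) :
    A *ᵥ (C *ᵥ x + F *ᵥ w + D *ᵥ v) = (A * C) *ᵥ x := by
  simp only [mulVec_add, mulVec_mulVec, hF, hD, zero_mulVec, add_zero]

end

theorem model_recursion_reproduces_known_state_general (nu nk pu m : ℕ)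
    (Ac : Matrix (Fin nk) (Fin nu) ℝ) (Ak : Matrix (Fin nk) (Fin nk) ℝ)
    (Bk : Matrix (Fin nk) (Fin m) ℝ)
    (Cu : Matrix (Fin pu) (Fin nu) ℝ) (Cf : Matrix (Fin pu) (Fin nk) ℝ)
    (Du : Matrix (Fin pu) (Fin m) ℝ) (Ay : Matrix (Fin nk) (Fin pu) ℝ)
    (hAc : Ac = Ay * Cu) (hACf : Ay * Cf = 0) (hADu : Ay * Du = 0)
    (xu : ℕ → Fin nu → ℝ) (xk : ℕ → Fin nk → ℝ) (u : ℕ → Fin m → ℝ)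
    (yu : ℕ → Fin pu → ℝ) (z : ℕ → Fin nk → ℝ)
    (hxk : ∀ k, xk (k + 1) = Ac.mulVec (xu k) + Ak.mulVec (xk k) + Bk.mulVec (u k))
    (hyu : ∀ k, yu k = Cu.mulVec (xu k) + Cf.mulVec (xk k) + Du.mulVec (u k))
    (hz0 : z 0 = xk 0)
    (hz : ∀ k, z (k + 1) = Ay.mulVec (yu k) + Ak.mulVec (z k) + Bk.mulVec (u k)) :
    ∀ k, z k = xk k := by
  intro k
  induction k with
  | zero => exact hz0
  | succ k ih =>
    rw [hz, hxk, ih, hyu, mulVec_mulVec_add_of_mul_eq_zero Ay Cu Cf Du hACf hADu, hAc]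

/-- The model recursion driven by the true unknown outputs reproduces the true
known-state trajectory of the full system. -/
theorem model_recursion_reproduces_known_state (nu nk pu m : ℕ)
    (Au : Matrix (Fin nu) (Fin nu) ℝ) (Af : Matrix (Fin nu) (Fin nk) ℝ)
    (Ac : Matrix (Fin nk) (Fin nu) ℝ) (Ak : Matrix (Fin nk) (Fin nk) ℝ)
    (Bu : Matrix (Fin nu) (Fin m) ℝ) (Bk : Matrix (Fin nk) (Fin m) ℝ)
    (Cu : Matrix (Fin pu) (Fin nu) ℝ) (Cf : Matrix (Fin pu) (Fin nk) ℝ)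
    (Du : Matrix (Fin pu) (Fin m) ℝ) (Ay : Matrix (Fin nk) (Fin pu) ℝ)
    (hAc : Ac = Ay * Cu) (hACf : Ay * Cf = 0) (hADu : Ay * Du = 0)
    (xu : ℕ → Fin nu → ℝ) (xk : ℕ → Fin nk → ℝ) (u : ℕ → Fin m → ℝ)
    (yu : ℕ → Fin pu → ℝ) (z : ℕ → Fin nk → ℝ)
    (hxu : ∀ k, xu (k + 1) = Au.mulVec (xu k) + Af.mulVec (xk k) + Bu.mulVec (u k))
    (hxk : ∀ k, xk (k + 1) = Ac.mulVec (xu k) + Ak.mulVec (xk k) + Bk.mulVec (u k))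
    (hyu : ∀ k, yu k = Cu.mulVec (xu k) + Cf.mulVec (xk k) + Du.mulVec (u k))
    (hz0 : z 0 = xk 0)
    (hz : ∀ k, z (k + 1) = Ay.mulVec (yu k) + Ak.mulVec (z k) + Bk.mulVec (u k)) :
    ∀ k, z k = xk k :=
  model_recursion_reproduces_known_state_general nu nk pu m Ac Ak Bk Cu Cf Du Ay hAc hACf hADu xu xk
    u yu z hxk hyu hz0 hz
end
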